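/- arXiv:2009.09826 — 5 statements merged into one kernel-verified Lean document; each statement's English description precedes it below -/
import Mathlib

section
/- Let n be a positive integer, let f : ℝⁿ → ℝⁿ be a vector field, and let Γ = (f, X_D, X_I, X_U) be a constrained continuous dynamical system with X_I ⊆ X_D and X_U ⊆ X_D. Suppose there exists a differentiable function B : ℝⁿ → ℝ such that: (1) B(x) ≤ 0 for all x ∈ X_I; (2) B(x) > 0 for all x ∈ X_U; (3) for all x ∈ X_D with B(x) = 0, the Lie derivative L_f B(x) = (DB(x))(f(x)) is strictly negative. Then Γ is safe: for every function x : ℝ → ℝⁿ with x(0) ∈ X_I such that x has derivative f(x(t)) at every t ≥ 0 and x(t) ∈ X_D for all t ≥ 0, we have x(t) ∉ X_U for all t ≥ 0. -/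
/-- Strict barrier certificate theorem: if `B` is nonpositive on the initial set `X_I`,
positive on the unsafe set `X_U`, and has strictly negative Lie derivative along `f`
on the zero level set within the domain `X_D`, then the constrained continuous
dynamical system `(f, X_D, X_I, X_U)` is safe. -/
theorem barrier_certificate_safety
    (n : ℕ) (hn : 0 < n)
    (f : EuclideanSpace ℝ (Fin n) → EuclideanSpace ℝ (Fin n))
    (X_D X_I X_U : Set (EuclideanSpace ℝ (Fin n)))
    (hI : X_I ⊆ X_D) (hU : X_U ⊆ X_D)
    (B : EuclideanSpace ℝ (Fin n) → ℝ) (hB : Differentiable ℝ B)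
    (h1 : ∀ x ∈ X_I, B x ≤ 0)
    (h2 : ∀ x ∈ X_U, 0 < B x)
    (h3 : ∀ x ∈ X_D, B x = 0 → fderiv ℝ B x (f x) < 0) :
    ∀ x : ℝ → EuclideanSpace ℝ (Fin n),
      x 0 ∈ X_I →
      (∀ t : ℝ, 0 ≤ t → HasDerivAt x (f (x t)) t) →
      (∀ t : ℝ, 0 ≤ t → x t ∈ X_D) →
      ∀ t : ℝ, 0 ≤ t → x t ∉ X_U := by
  intro x hx0 hxderiv hxD t ht hxtU
  set g : ℝ → ℝ := fun s => B (x s) with hg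
  have hgd : ∀ s : ℝ, 0 ≤ s → HasDerivAt g (fderiv ℝ B (x s) (f (x s))) s := by
    intro s hs
    exact (hB (x s)).hasFDerivAt.comp_hasDerivAt s (hxderiv s hs)
  have hgc : ContinuousOn g (Set.Icc 0 t) := fun u hu =>
    (hgd u hu.1).continuousAt.continuousWithinAt
  have hg0 : g 0 ≤ 0 := h1 _ hx0
  have hgt : 0 < g t := h2 _ hxtU
  -- set of zeros in [0, t]
  set S : Set ℝ := Set.Icc 0 t ∩ g ⁻¹' {0} with hS
  have hSne : S.Nonempty := by
    have : (0 : ℝ) ∈ Set.Icc (g 0) (g t) := ⟨hg0, hgt.le⟩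
    obtain ⟨u, hu, hgu⟩ := intermediate_value_Icc ht hgc this
    exact ⟨u, hu, hgu⟩
  have hSclosed : IsClosed S :=
    hgc.preimage_isClosed_of_isClosed isClosed_Icc isClosed_singleton
  have hSbdd : BddAbove S := BddAbove.mono (fun u hu => hu.1) bddAbove_Icc
  set s := sSup S with hs
  have hsS : s ∈ S := hSclosed.csSup_mem hSne hSbdd
  have hs0 : 0 ≤ s := hsS.1.1
  have hst : s ≤ t := hsS.1.2
  have hgs : g s = 0 := hsS.2
  have hslt : s < t := hst.lt_of_ne (fun h => hgt.ne' (h ▸ hgs))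
  -- g is positive on (s, t]
  have hpos : ∀ u, u ∈ Set.Ioc s t → 0 < g u := by
    intro u hu
    by_contra hle
    push_neg at hle
    have hu0 : 0 ≤ u := le_trans hs0 hu.1.le
    have hgc' : ContinuousOn g (Set.Icc u t) :=
      hgc.mono (Set.Icc_subset_Icc hu0 le_rfl)
    have : (0 : ℝ) ∈ Set.Icc (g u) (g t) := ⟨hle, hgt.le⟩
    obtain ⟨v, hv, hgv⟩ := intermediate_value_Icc hu.2 hgc' this
    have hvS : v ∈ S := ⟨⟨le_trans hu0 hv.1, hv.2⟩, hgv⟩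
    have : v ≤ s := le_csSup hSbdd hvS
    have : u ≤ s := le_trans hv.1 this
    exact absurd this (not_le.mpr hu.1)
  -- derivative of g at s is negative by h3
  have hd : fderiv ℝ B (x s) (f (x s)) < 0 := h3 _ (hxD s hs0) hgs
  -- but the slope from the right is nonnegative, contradiction
  have htend : Filter.Tendsto (slope g s) (nhdsWithin s (Set.Ioi s))
      (nhds (fderiv ℝ B (x s) (f (x s)))) :=
    (hasDerivAt_iff_tendsto_slope.mp (hgd s hs0)).mono_left
      (nhdsWithin_mono s fun u hu => ne_of_gt hu)
  have hev : ∀ᶠ u in nhdsWithin s (Set.Ioi s), 0 ≤ slope g s u := by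
    have hmem : Set.Ioc s t ∈ nhdsWithin s (Set.Ioi s) :=
      Ioc_mem_nhdsGT_of_mem ⟨le_rfl, hslt⟩
    filter_upwards [hmem] with u hu
    rw [slope_def_field, hgs, sub_zero]
    exact div_nonneg (hpos u hu).le (sub_nonneg.mpr hu.1.le)
  have : 0 ≤ fderiv ℝ B (x s) (f (x s)) :=
    ge_of_tendsto htend hev
  exact absurd this (not_le.mpr hd)
end

section
/- Let n, m be positive integers, f : ℝⁿ × ℝᵐ → ℝⁿ a controlled vector field, g : ℝⁿ → ℝᵐ a feedback control law, and X_D, X_I, X_U ⊆ ℝⁿ with X_I ⊆ X_D and X_U ⊆ X_D. Suppose there exists a differentiable function B : ℝⁿ → ℝ such that B(x) ≤ 0 for all x ∈ X_I, B(x) > 0 for all x ∈ X_U, and for all x ∈ X_D with B(x) = 0 one has (DB(x))(f(x, g(x))) < 0. Then the closed-loop system is safe: for every function x : ℝ → ℝⁿ with x(0) ∈ X_I whose derivative at each t ≥ 0 equals f(x(t), g(x(t))) and which satisfies x(t) ∈ X_D for all t ≥ 0, we have x(t) ∉ X_U for all t ≥ 0. -/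
/-- Safety of a closed-loop controlled system certified by a barrier function:
if `B` is nonpositive on `X_I`, positive on `X_U`, and has strictly negative Lie
derivative along the closed-loop vector field `x ↦ f (x, g x)` on its zero level
set within `X_D`, then every closed-loop trajectory starting in `X_I` that stays
in `X_D` never enters `X_U`. -/
theorem closed_loop_barrier_safety
    (n m : ℕ) (hn : 0 < n) (hm : 0 < m)
    (f : EuclideanSpace ℝ (Fin n) × EuclideanSpace ℝ (Fin m) → EuclideanSpace ℝ (Fin n))
    (g : EuclideanSpace ℝ (Fin n) → EuclideanSpace ℝ (Fin m))
    (X_D X_I X_U : Set (EuclideanSpace ℝ (Fin n)))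
    (hI : X_I ⊆ X_D) (hU : X_U ⊆ X_D)
    (B : EuclideanSpace ℝ (Fin n) → ℝ) (hB : Differentiable ℝ B)
    (h1 : ∀ x ∈ X_I, B x ≤ 0)
    (h2 : ∀ x ∈ X_U, 0 < B x)
    (h3 : ∀ x ∈ X_D, B x = 0 → fderiv ℝ B x (f (x, g x)) < 0) :
    ∀ x : ℝ → EuclideanSpace ℝ (Fin n),
      x 0 ∈ X_I →
      (∀ t : ℝ, 0 ≤ t → HasDerivAt x (f (x t, g (x t))) t) →
      (∀ t : ℝ, 0 ≤ t → x t ∈ X_D) →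
      ∀ t : ℝ, 0 ≤ t → x t ∉ X_U := by
  intro x hx0 hx' hxD t ht hxtU
  set φ : ℝ → ℝ := fun u => B (x u) with hφdef
  have hφ' : ∀ u : ℝ, 0 ≤ u →
      HasDerivAt φ (fderiv ℝ B (x u) (f (x u, g (x u)))) u := fun u hu =>
    ((hB (x u)).hasFDerivAt).comp_hasDerivAt u (hx' u hu)
  have hφt : 0 < φ t := h2 _ hxtU
  have hφ0 : φ 0 ≤ 0 := h1 _ hx0
  -- the set of times in [0, t] where φ ≤ 0
  set S : Set ℝ := Set.Icc 0 t ∩ φ ⁻¹' Set.Iic 0 with hSdef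
  have hS0 : (0 : ℝ) ∈ S := ⟨⟨le_refl 0, ht⟩, hφ0⟩
  have hcont : ContinuousOn φ (Set.Icc 0 t) := fun u hu =>
    ((hφ' u hu.1).continuousAt).continuousWithinAt
  have hSclosed : IsClosed S :=
    hcont.preimage_isClosed_of_isClosed isClosed_Icc isClosed_Iic
  have hSbdd : BddAbove S := BddAbove.mono Set.inter_subset_left (bddAbove_Icc)
  set s : ℝ := sSup S with hsdef
  have hScompact : IsCompact S :=
    isCompact_Icc.of_isClosed_subset hSclosed Set.inter_subset_left
  have hsS : s ∈ S := hScompact.sSup_mem ⟨0, hS0⟩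
  obtain ⟨⟨hs0, hst⟩, hφs⟩ := hsS
  have hsne : s ≠ t := by
    intro h; rw [h] at hφs; exact absurd hφt (not_lt.2 hφs)
  have hslt : s < t := lt_of_le_of_ne hst hsne
  -- for u in (s, t], φ u > 0
  have hpos : ∀ u : ℝ, s < u → u ≤ t → 0 < φ u := by
    intro u hsu hut
    by_contra h
    exact absurd (le_csSup hSbdd ⟨⟨le_trans hs0 hsu.le, hut⟩, not_lt.1 h⟩)
      (not_le.2 hsu)
  -- φ s = 0 by right-continuity
  have hφs0 : φ s = 0 := by
    refine le_antisymm hφs ?_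
    have htend : Filter.Tendsto φ (nhdsWithin s (Set.Ioi s)) (nhds (φ s)) :=
      ((hφ' s hs0).continuousAt).continuousWithinAt
    refine ge_of_tendsto htend ?_
    filter_upwards [Ioc_mem_nhdsGT hslt] with u hu
    exact (hpos u hu.1 hu.2).le
  -- the derivative of φ at s is negative
  have hderiv : fderiv ℝ B (x s) (f (x s, g (x s))) < 0 :=
    h3 _ (hxD s hs0) hφs0
  -- so φ becomes negative just after s: contradiction
  have hslope := (hasDerivAt_iff_tendsto_slope).1 (hφ' s hs0)
  have hslope' : Filter.Tendsto (slope φ s) (nhdsWithin s (Set.Ioi s))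
      (nhds (fderiv ℝ B (x s) (f (x s, g (x s))))) :=
    hslope.mono_left (nhdsWithin_mono s fun u hu => ne_of_gt hu)
  have hev : ∀ᶠ u in nhdsWithin s (Set.Ioi s), slope φ s u < 0 :=
    hslope' (Iio_mem_nhds hderiv)
  have hIoc : Set.Ioc s t ∈ nhdsWithin s (Set.Ioi s) := Ioc_mem_nhdsGT hslt
  obtain ⟨u, hu1, hu2⟩ := (hev.and (Filter.eventually_of_mem hIoc fun u hu => hu)).exists
  have : slope φ s u = (φ u - φ s) / (u - s) := by
    rw [slope_def_field]
  rw [this, hφs0, sub_zero] at hu1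
  have hφuneg : φ u < 0 := by
    have := div_neg_iff.1 hu1
    rcases this with ⟨h1', h2'⟩ | ⟨h1', h2'⟩
    · linarith [sub_pos.2 hu2.1]
    · exact h1'
  exact absurd (hpos u hu2.1 hu2.2) (not_lt.2 hφuneg.le)
end

section
/- Let n be a positive integer, f : ℝⁿ → ℝⁿ a vector field, X_D ⊆ ℝⁿ, X_I ⊆ X_D, and B : ℝⁿ → ℝ differentiable with B(x) ≤ 0 for all x ∈ X_I, and (DB(x))(f(x)) < 0 for all x ∈ X_D with B(x) = 0. Then for every function x : ℝ → ℝⁿ with x(0) ∈ X_I whose derivative at each t ≥ 0 equals f(x(t)) and which satisfies x(t) ∈ X_D for all t ≥ 0, the set {x ∈ ℝⁿ : B(x) ≤ 0} is invariant along the trajectory, i.e. B(x(t)) ≤ 0 for all t ≥ 0. -/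
open Topology Filter


/-- Invariance of the sublevel set `{x | B x ≤ 0}` along trajectories: if `B` is
nonpositive on the initial set and has strictly negative Lie derivative along `f`
on its zero level set within the domain `X_D`, then `B` stays nonpositive along
every trajectory starting in `X_I` that stays in `X_D`. -/
theorem barrier_sublevel_invariant
    (n : ℕ) (hn : 0 < n)
    (f : EuclideanSpace ℝ (Fin n) → EuclideanSpace ℝ (Fin n))
    (X_D X_I : Set (EuclideanSpace ℝ (Fin n)))
    (hI : X_I ⊆ X_D)
    (B : EuclideanSpace ℝ (Fin n) → ℝ) (hB : Differentiable ℝ B)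
    (h1 : ∀ x ∈ X_I, B x ≤ 0)
    (h3 : ∀ x ∈ X_D, B x = 0 → fderiv ℝ B x (f x) < 0) :
    ∀ x : ℝ → EuclideanSpace ℝ (Fin n),
      x 0 ∈ X_I →
      (∀ t : ℝ, 0 ≤ t → HasDerivAt x (f (x t)) t) →
      (∀ t : ℝ, 0 ≤ t → x t ∈ X_D) →
      ∀ t : ℝ, 0 ≤ t → B (x t) ≤ 0 := by
  intro x hx0 hderiv hdom t ht
  by_contra hpos
  push_neg at hpos
  set g : ℝ → ℝ := fun u => B (x u) with hg_def
  have hg : ∀ u : ℝ, 0 ≤ u → HasDerivAt g (fderiv ℝ B (x u) (f (x u))) u := by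
    intro u hu
    exact ((hB (x u)).hasFDerivAt).comp_hasDerivAt u (hderiv u hu)
  have hgc : ContinuousOn g (Set.Icc 0 t) := fun u hu =>
    ((hg u hu.1).continuousAt).continuousWithinAt
  -- the set of times in [0, t] where g ≤ 0
  set S : Set ℝ := Set.Icc 0 t ∩ g ⁻¹' Set.Iic 0 with hS_def
  have hSne : S.Nonempty := ⟨0, ⟨le_refl 0, ht⟩, h1 _ hx0⟩
  have hSclosed : IsClosed S :=
    hgc.preimage_isClosed_of_isClosed isClosed_Icc isClosed_Iic
  have hScompact : IsCompact S :=
    (isCompact_Icc (a := (0:ℝ)) (b := t)).of_isClosed_subset hSclosed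
      Set.inter_subset_left
  set s : ℝ := sSup S with hs_def
  have hsS : s ∈ S := hScompact.sSup_mem hSne
  have hs0 : 0 ≤ s := hsS.1.1
  have hst : s ≤ t := hsS.1.2
  have hgs : g s ≤ 0 := hsS.2
  have hslt : s < t := by
    rcases lt_or_eq_of_le hst with h | h
    · exact h
    · exfalso; rw [h] at hgs; exact absurd hpos (not_lt.mpr hgs)
  have hbdd : BddAbove S := hScompact.bddAbove
  -- g is positive on (s, t]
  have hposafter : ∀ u : ℝ, s < u → u ≤ t → 0 < g u := by
    intro u hsu hut
    by_contra h
    push_neg at h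
    have : u ∈ S := ⟨⟨le_trans hs0 hsu.le, hut⟩, h⟩
    exact absurd (le_csSup hbdd this) (not_le.mpr hsu)
  -- case split on g s
  rcases lt_or_eq_of_le hgs with hneg | hzero
  · -- g s < 0 : by continuity g < 0 slightly after s, contradiction
    have hca : ContinuousAt g s := (hg s hs0).continuousAt
    have hev : ∀ᶠ u in 𝓝 s, g u < 0 := hca.eventually_lt_const hneg
    have hev2 : Set.Ioo s t ∈ 𝓝[>] s := Ioo_mem_nhdsGT_of_mem ⟨le_refl s, hslt⟩
    have : ∀ᶠ u in 𝓝[>] s, g u < 0 ∧ u ∈ Set.Ioo s t :=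
      (hev.filter_mono nhdsWithin_le_nhds).and (Filter.eventually_of_mem hev2 fun u hu => hu)
    obtain ⟨u, hu1, hu2⟩ := this.exists
    exact absurd (hposafter u hu2.1 hu2.2.le) (not_lt.mpr hu1.le)
  · -- g s = 0 : derivative negative at s, so g decreases, contradiction
    have hBz : B (x s) = 0 := hzero
    have hd : fderiv ℝ B (x s) (f (x s)) < 0 := h3 _ (hdom s hs0) hBz
    have hslope : Filter.Tendsto (slope g s) (𝓝[≠] s) (𝓝 (fderiv ℝ B (x s) (f (x s)))) :=
      hasDerivAt_iff_tendsto_slope.mp (hg s hs0)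
    have hslope' : Filter.Tendsto (slope g s) (𝓝[>] s) (𝓝 (fderiv ℝ B (x s) (f (x s)))) :=
      hslope.mono_left (nhdsWithin_mono s fun u hu => ne_of_gt hu)
    have hev : ∀ᶠ u in 𝓝[>] s, slope g s u < 0 := hslope'.eventually_lt_const hd
    have hev2 : Set.Ioo s t ∈ 𝓝[>] s := Ioo_mem_nhdsGT_of_mem ⟨le_refl s, hslt⟩
    obtain ⟨u, hu1, hu2⟩ := (hev.and (Filter.eventually_of_mem hev2 fun u hu => hu)).exists
    have hsu : s < u := hu2.1
    have : g u - g s < 0 := by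
      have := hu1
      rw [slope_def_field] at this
      rcases div_neg_iff.mp this with ⟨_, h⟩ | ⟨h, _⟩
      · linarith [sub_pos.mpr hsu]
      · linarith
    have hgu : g u < 0 := by linarith [hzero ▸ this]
    exact absurd (hposafter u hsu hu2.2.le) (not_lt.mpr hgu.le)
end

section
/- Let g : ℝ → ℝ be continuous on [0, ∞) with g(0) ≤ 0. Suppose that for every t ≥ 0 with g(t) = 0, g is differentiable at t with g'(t) < 0. Then g(t) ≤ 0 for all t ≥ 0. -/
/-- Scalar lemma underlying barrier-certificate safety: a function continuous on
`[0, ∞)` that starts nonpositive and has a strictly negative derivative at every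
nonnegative zero remains nonpositive on `[0, ∞)`. -/
theorem nonpos_of_neg_deriv_at_zeros
    (g : ℝ → ℝ)
    (hcont : ContinuousOn g (Set.Ici (0 : ℝ)))
    (h0 : g 0 ≤ 0)
    (hderiv : ∀ t : ℝ, 0 ≤ t → g t = 0 → ∃ d : ℝ, HasDerivAt g d t ∧ d < 0) :
    ∀ t : ℝ, 0 ≤ t → g t ≤ 0 := by
  by_contra h
  push_neg at h
  obtain ⟨T, hT0, hgT⟩ := h
  set A : Set ℝ := Set.Icc 0 T ∩ g ⁻¹' Set.Iic 0 with hA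
  have hAne : A.Nonempty := ⟨0, ⟨le_refl 0, hT0⟩, h0⟩
  have hAbdd : BddAbove A := ⟨T, fun x hx => hx.1.2⟩
  have hAclosed : IsClosed A := by
    have hcT : ContinuousOn g (Set.Icc 0 T) :=
      hcont.mono (fun x hx => hx.1)
    exact hcT.preimage_isClosed_of_isClosed isClosed_Icc isClosed_Iic
  set s := sSup A with hs
  have hsA : s ∈ A := hAclosed.csSup_mem hAne hAbdd
  have hs0 : 0 ≤ s := hsA.1.1
  have hsT : s ≤ T := hsA.1.2
  have hgs : g s ≤ 0 := hsA.2
  -- helper: no point of Ioc s T lies in A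
  have hno : ∀ t ∈ Set.Ioc s T, g t ≤ 0 → False := by
    intro t ht hgt
    exact absurd (le_csSup hAbdd ⟨⟨hs0.trans ht.1.le, ht.2⟩, hgt⟩) (not_le.2 ht.1)
  have hIocNeBot : ∀ (h : s < T), (nhdsWithin s (Set.Ioc s T)).NeBot := by
    intro h
    exact left_nhdsWithin_Ioc_neBot h
  rcases eq_or_lt_of_le hgs with hgs0 | hgsneg
  · -- g s = 0
    have hsltT : s < T := by
      rcases eq_or_lt_of_le hsT with h | h
      · exfalso; rw [h] at hgs0; linarith
      · exact h
    obtain ⟨d, hd, hdneg⟩ := hderiv s hs0 hgs0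
    have hslope : Filter.Tendsto (slope g s) (nhdsWithin s {s}ᶜ) (nhds d) :=
      hasDerivAt_iff_tendsto_slope.1 hd
    have hmono : nhdsWithin s (Set.Ioc s T) ≤ nhdsWithin s {s}ᶜ :=
      nhdsWithin_mono s (fun x hx => ne_of_gt hx.1)
    have hslope' : Filter.Tendsto (slope g s) (nhdsWithin s (Set.Ioc s T)) (nhds d) :=
      hslope.mono_left hmono
    have hev : ∀ᶠ t in nhdsWithin s (Set.Ioc s T), slope g s t < 0 :=
      hslope' (Iio_mem_nhds hdneg)
    haveI := hIocNeBot hsltT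
    obtain ⟨t, htlt, htmem⟩ := (hev.and self_mem_nhdsWithin).exists
    have htpos : 0 < t - s := sub_pos.2 htmem.1
    have : g t - g s < 0 := by
      have := htlt
      rw [slope_def_field] at this
      have := (div_neg_iff).1 this
      rcases this with ⟨h1, h2⟩ | ⟨h1, h2⟩
      · exact absurd h2 (not_lt.2 htpos.le)
      · exact h1
    rw [← hgs0] at this
    exact hno t htmem (by linarith)
  · -- g s < 0
    have hsltT : s < T := by
      rcases eq_or_lt_of_le hsT with h | h
      · exfalso; rw [h] at hgsneg; linarith
      · exact h
    have hcs : ContinuousWithinAt g (Set.Ici 0) s := hcont s hs0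
    have hev : ∀ᶠ t in nhdsWithin s (Set.Ici 0), g t < 0 :=
      hcs (Iio_mem_nhds hgsneg)
    have hmono : nhdsWithin s (Set.Ioc s T) ≤ nhdsWithin s (Set.Ici 0) :=
      nhdsWithin_mono s (fun x hx => hs0.trans hx.1.le)
    haveI := hIocNeBot hsltT
    obtain ⟨t, htlt, htmem⟩ := ((hev.filter_mono hmono).and self_mem_nhdsWithin).exists
    exact hno t htmem htlt.le
end

section
/- Let n, m be positive integers, f : ℝⁿ × ℝᵐ → ℝⁿ, N_c : ℝⁿ → ℝᵐ a controller, N_b : ℝⁿ → ℝ a differentiable barrier candidate, and X_D, X_I, X_U ⊆ ℝⁿ with X_I ⊆ X_D and X_U ⊆ X_D. Suppose the verification formula is unsatisfiable, i.e. there exists no x with (x ∈ X_I and N_b(x) > 0), no x with (x ∈ X_U and N_b(x) ≤ 0), and no x with (x ∈ X_D and N_b(x) = 0 and (DN_b(x))(f(x, N_c(x))) ≥ 0). Then the closed-loop system is safe: every function x : ℝ → ℝⁿ with x(0) ∈ X_I whose derivative at each t ≥ 0 equals f(x(t), N_c(x(t))) and which satisfies x(t) ∈ X_D for all t ≥ 0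 never enters X_U. -/
open Topology Filter


/-- If the verification formula is unsatisfiable — there is no point of `X_I`
where `N_b > 0`, no point of `X_U` where `N_b ≤ 0`, and no point of `X_D` on the
zero level set of `N_b` where the Lie derivative along the closed-loop field
`x ↦ f (x, N_c x)` is nonnegative — then the closed-loop system is safe. -/
theorem verified_nn_controller_safe
    (n m : ℕ) (hn : 0 < n) (hm : 0 < m)
    (f : EuclideanSpace ℝ (Fin n) × EuclideanSpace ℝ (Fin m) → EuclideanSpace ℝ (Fin n))
    (N_c : EuclideanSpace ℝ (Fin n) → EuclideanSpace ℝ (Fin m))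
    (N_b : EuclideanSpace ℝ (Fin n) → ℝ) (hN_b : Differentiable ℝ N_b)
    (X_D X_I X_U : Set (EuclideanSpace ℝ (Fin n)))
    (hI : X_I ⊆ X_D) (hU : X_U ⊆ X_D)
    (h1 : ¬ ∃ x, x ∈ X_I ∧ 0 < N_b x)
    (h2 : ¬ ∃ x, x ∈ X_U ∧ N_b x ≤ 0)
    (h3 : ¬ ∃ x, x ∈ X_D ∧ N_b x = 0 ∧ 0 ≤ fderiv ℝ N_b x (f (x, N_c x))) :
    ∀ x : ℝ → EuclideanSpace ℝ (Fin n),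
      x 0 ∈ X_I →
      (∀ t : ℝ, 0 ≤ t → HasDerivAt x (f (x t, N_c (x t))) t) →
      (∀ t : ℝ, 0 ≤ t → x t ∈ X_D) →
      ∀ t : ℝ, 0 ≤ t → x t ∉ X_U := by
  push_neg at h1 h2 h3
  intro x hx0 hderiv hD t ht hxtU
  set g : ℝ → ℝ := fun s => N_b (x s) with hg
  have hg' : ∀ s : ℝ, 0 ≤ s →
      HasDerivAt g (fderiv ℝ N_b (x s) (f (x s, N_c (x s)))) s := fun s hs =>
    (hN_b (x s)).hasFDerivAt.comp_hasDerivAt s (hderiv s hs)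
  have hg0 : g 0 ≤ 0 := h1 _ hx0
  have hgt : 0 < g t := h2 _ hxtU
  have hgcont : ContinuousOn g (Set.Icc 0 t) := fun s hs =>
    ((hg' s hs.1).continuousAt).continuousWithinAt
  -- set of times in [0,t] where g ≤ 0
  set S : Set ℝ := Set.Icc 0 t ∩ g ⁻¹' Set.Iic 0 with hS
  have hSne : S.Nonempty := ⟨0, ⟨le_refl 0, ht⟩, hg0⟩
  have hSbdd : BddAbove S := ⟨t, fun s hs => hs.1.2⟩
  have hSclosed : IsClosed S :=
    hgcont.preimage_isClosed_of_isClosed isClosed_Icc isClosed_Iic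
  obtain ⟨s₀, hs₀S, hs₀sup⟩ : ∃ s₀, s₀ ∈ S ∧ s₀ = sSup S :=
    ⟨sSup S, hSclosed.csSup_mem hSne hSbdd, rfl⟩
  have hs₀0 : (0:ℝ) ≤ s₀ := hs₀S.1.1
  have hs₀t : s₀ ≤ t := hs₀S.1.2
  have hgs₀ : g s₀ ≤ 0 := hs₀S.2
  have hs₀lt : s₀ < t := lt_of_le_of_ne hs₀t (by
    rintro rfl; exact absurd hgs₀ (not_le.2 hgt))
  -- g is positive strictly after s₀ (within (s₀, t])
  have hpos : ∀ s, s ∈ Set.Ioc s₀ t → 0 < g s := by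
    intro s hs
    by_contra hle
    exact absurd (hs₀sup ▸ le_csSup hSbdd ⟨⟨hs₀0.trans hs.1.le, hs.2⟩, le_of_not_gt hle⟩)
      (not_le.2 hs.1)
  -- g s₀ = 0 by continuity from the right
  have hgeq : g s₀ = 0 := by
    refine le_antisymm hgs₀ ?_
    have hcw : ContinuousWithinAt g (Set.Ioc s₀ t) s₀ :=
      ((hg' s₀ hs₀0).continuousAt).continuousWithinAt
    have hne : (𝓝[Set.Ioc s₀ t] s₀).NeBot := by
      apply mem_closure_iff_nhdsWithin_neBot.mp
      rw [closure_Ioc hs₀lt.ne]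
      exact ⟨le_refl _, hs₀t⟩
    exact ge_of_tendsto hcw (Filter.eventually_of_mem self_mem_nhdsWithin
      (fun s hs => (hpos s hs).le))
  -- the Lie derivative at s₀ is negative by h3
  have hlie : fderiv ℝ N_b (x s₀) (f (x s₀, N_c (x s₀))) < 0 :=
    h3 _ (hD s₀ hs₀0) hgeq
  -- but the right slopes are nonnegative, so the derivative is ≥ 0
  have hslope : Filter.Tendsto (slope g s₀) (𝓝[>] s₀)
      (𝓝 (fderiv ℝ N_b (x s₀) (f (x s₀, N_c (x s₀))))) :=
    ((hasDerivAt_iff_tendsto_slope.mp (hg' s₀ hs₀0))).mono_left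
      (nhdsWithin_mono _ (fun s hs => ne_of_gt hs))
  have hge : 0 ≤ fderiv ℝ N_b (x s₀) (f (x s₀, N_c (x s₀))) := by
    refine ge_of_tendsto hslope ?_
    have : Set.Ioc s₀ t ∈ 𝓝[>] s₀ := Ioc_mem_nhdsGT_of_mem ⟨le_refl _, hs₀lt⟩
    filter_upwards [this] with s hs
    have h1 : 0 < s - s₀ := sub_pos.2 hs.1
    have h2 : 0 ≤ g s - g s₀ := by
      rw [hgeq, sub_zero]; exact (hpos s hs).le
    simpa [slope, div_eq_inv_mul] using mul_nonneg (inv_nonneg.2 h1.le) h2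
  exact absurd hge (not_le.2 hlie)
end
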